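/- Let ∑a_n be a convergent series of nonnegative nonincreasing terms, F_n the set of n-initial subsums regarded as a finite increasing sequence, r_n the n-th remainder, and Δ_ε F the maximal stretch of a maximal ε-close block of F. Then the achievement set A(a_n) contains a nondegenerate interval if and only if lim_{n→∞} Δ_{r_n} F_n > 0. -/

import Mathlib

open Set MeasureTheory Pointwise

/-- The achievement set (set of all subsums) of the series `∑ a n`. -/
noncomputable def achievementSet (a : ℕ → ℝ) : Set ℝ :=
  {x | ∃ I : Set ℕ, HasSum (fun i : I => a i) x}

/-- `tail a n` is the sum of the terms with index `≥ n`. -/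
noncomputable def tail (a : ℕ → ℝ) (n : ℕ) : ℝ := ∑' i : ℕ, a (n + i)

/-- The set of `k`-initial subsums: sums over subsets of the first `k` terms. -/
def Fset (a : ℕ → ℝ) (k : ℕ) : Set ℝ :=
  {x | ∃ I : Finset ℕ, I ⊆ Finset.range k ∧ x = ∑ i ∈ I, a i}

/-- The `k`-th iterate `I_k = ⋃_{f ∈ F_k} [f, f + r_k]`. -/
noncomputable def iter (a : ℕ → ℝ) (k : ℕ) : Set ℝ :=
  ⋃ f ∈ Fset a k, Set.Icc f (f + tail a k)

/-- A Cantor set: a nonempty compact perfect nowhere dense subset of `ℝ`. -/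
def IsCantorSet (C : Set ℝ) : Prop :=
  C.Nonempty ∧ IsCompact C ∧ Perfect C ∧ interior C = ∅

/-- A Cantorval: a nonempty compact set equal to the closure of its interior such that
both endpoints of every nontrivial connected component are accumulation points of
trivial (one-point) components. -/
def IsCantorval (P : Set ℝ) : Prop :=
  P.Nonempty ∧ IsCompact P ∧ P = closure (interior P) ∧
  ∀ x ∈ P, (connectedComponentIn P x).Nontrivial →
    ∀ y ∈ ({sInf (connectedComponentIn P x), sSup (connectedComponentIn P x)} : Set ℝ),
      ∀ ε > 0, ∃ z ∈ P, z ≠ y ∧ |z - y| < ε ∧ connectedComponentIn P z = {z}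

/-- The maximal stretch over maximal ε-close blocks of a finite set F of reals:
the supremum of b - c over pairs c ≤ b in F such that every element of F in [c, b)
has a successor in F within distance ε. -/
noncomputable def deltaEps (ε : ℝ) (F : Set ℝ) : ℝ :=
  sSup {d | ∃ c ∈ F, ∃ b ∈ F, c ≤ b ∧ d = b - c ∧
    ∀ x ∈ F, c ≤ x → x < b → ∃ y ∈ F, x < y ∧ y ≤ x + ε}



section Aux
open Filter
variable {a : ℕ → ℝ}

lemma summable_shift (hsum : Summable a) (n : ℕ) : Summable (fun i => a (n + i)) := by
  have := (summable_nat_add_iff n).2 hsum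
  simpa [add_comm] using this

lemma tail_nonneg (hpos : ∀ n, 0 ≤ a n) (n : ℕ) : 0 ≤ tail a n :=
  tsum_nonneg (fun _ => hpos _)

lemma tail_eq_sum_add (hsum : Summable a) (n k : ℕ) :
    tail a n = (∑ i ∈ Finset.range k, a (n + i)) + tail a (n + k) := by
  have h := Summable.sum_add_tsum_nat_add (f := fun i => a (n + i)) k (summable_shift hsum n)
  rw [tail, ← h]
  congr 1
  unfold tail
  exact tsum_congr fun i => congrArg a (by omega)

lemma tail_succ (hsum : Summable a) (n : ℕ) : tail a n = a n + tail a (n + 1) := by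
  simpa using tail_eq_sum_add hsum n 1

lemma tail_anti (hpos : ∀ n, 0 ≤ a n) (hsum : Summable a) : Antitone (tail a) := by
  have : ∀ n, tail a (n + 1) ≤ tail a n := by
    intro n; rw [tail_succ hsum n]; linarith [hpos n]
  exact antitone_nat_of_succ_le this

lemma tail_tendsto (hsum : Summable a) : Tendsto (tail a) atTop (nhds 0) := by
  have h := tendsto_sum_nat_add a
  have : (fun i => ∑' k, a (k + i)) = tail a := by
    funext n; exact tsum_congr fun i => congrArg a (by omega)
  rwa [this] at h

lemma tail_le_tsum (hpos : ∀ n, 0 ≤ a n) (hsum : Summable a) (n : ℕ) : tail a n ≤ ∑' i, a i := by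
  have := tail_anti hpos hsum (Nat.zero_le n)
  simpa [tail] using this

lemma Fset_finite (k : ℕ) : (Fset a k).Finite := by
  apply Set.Finite.subset (Set.Finite.image (fun I : Finset ℕ => ∑ i ∈ I, a i)
    (Finset.range k).powerset.finite_toSet)
  rintro x ⟨I, hI, rfl⟩
  exact ⟨I, Finset.mem_coe.2 (Finset.mem_powerset.2 hI), rfl⟩

lemma zero_mem_Fset (k : ℕ) : (0 : ℝ) ∈ Fset a k :=
  ⟨∅, by simp⟩

lemma Fset_nonneg (hpos : ∀ n, 0 ≤ a n) {k : ℕ} {f : ℝ} (hf : f ∈ Fset a k) : 0 ≤ f := by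
  obtain ⟨I, -, rfl⟩ := hf
  exact Finset.sum_nonneg fun i _ => hpos i

lemma Fset_le (hpos : ∀ n, 0 ≤ a n) (hsum : Summable a) {k : ℕ} {f : ℝ}
    (hf : f ∈ Fset a k) : f ≤ ∑' i, a i := by
  obtain ⟨I, hI, rfl⟩ := hf
  exact Summable.sum_le_tsum I (fun i _ => hpos i) hsum

lemma Fset_succ (k : ℕ) {f : ℝ} (hf : f ∈ Fset a (k + 1)) :
    ∃ g ∈ Fset a k, f = g ∨ f = g + a k := by
  obtain ⟨I, hI, rfl⟩ := hf
  classical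
  refine ⟨∑ i ∈ I.erase k, a i, ⟨I.erase k, ?_, rfl⟩, ?_⟩
  · intro i hi
    have := hI (Finset.mem_of_mem_erase hi)
    simp only [Finset.mem_range] at *
    have := Finset.ne_of_mem_erase hi
    omega
  · by_cases hk : k ∈ I
    · right; rw [Finset.sum_erase_add I a hk]
    · left; rw [Finset.erase_eq_of_notMem hk]

lemma iter_succ_subset (hpos : ∀ n, 0 ≤ a n) (hsum : Summable a) (k : ℕ) :
    iter a (k + 1) ⊆ iter a k := by
  intro x hx
  simp only [iter, Set.mem_iUnion] at hx ⊢
  obtain ⟨f, hf, hx⟩ := hx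
  obtain ⟨g, hg, hfg⟩ := Fset_succ k hf
  refine ⟨g, hg, ?_⟩
  have htail := tail_succ hsum k
  have hak := hpos k
  have ht1 : 0 ≤ tail a (k+1) := tail_nonneg hpos (k+1)
  rcases hfg with rfl | rfl
  · exact ⟨le_trans (by linarith [hx.1]) hx.1, by linarith [hx.2]⟩
  · exact ⟨by linarith [hx.1], by linarith [hx.2]⟩

lemma iter_anti (hpos : ∀ n, 0 ≤ a n) (hsum : Summable a) :
    ∀ {m n : ℕ}, m ≤ n → iter a n ⊆ iter a m := by
  intro m n h
  induction h with
  | refl => exact subset_rfl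
  | step _ ih => exact (iter_succ_subset hpos hsum _).trans ih

lemma isClosed_iter (k : ℕ) : IsClosed (iter a k) := by
  apply Set.Finite.isClosed_biUnion (Fset_finite k)
  exact fun f _ => isClosed_Icc

lemma iter_subset_Icc (hpos : ∀ n, 0 ≤ a n) (hsum : Summable a) (k : ℕ) :
    iter a k ⊆ Set.Icc 0 (∑' i, a i) := by
  rintro x hx
  simp only [iter, Set.mem_iUnion] at hx
  obtain ⟨f, hf, h1, h2⟩ := hx
  obtain ⟨I, hI, rfl⟩ := hf
  have hfle : ∑ i ∈ I, a i ≤ ∑ i ∈ Finset.range k, a i :=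
    Finset.sum_le_sum_of_subset_of_nonneg hI (fun i _ _ => hpos i)
  have hsplit : tail a 0 = (∑ i ∈ Finset.range k, a (0 + i)) + tail a (0 + k) :=
    tail_eq_sum_add hsum 0 k
  rw [show 0 + k = k from by omega] at hsplit
  have htz : tail a 0 = ∑' i, a i := tsum_congr fun i => congrArg a (by omega)
  simp only [zero_add] at hsplit
  constructor
  · exact le_trans (Finset.sum_nonneg fun i _ => hpos i) h1
  · calc x ≤ ∑ i ∈ I, a i + tail a k := h2
      _ ≤ ∑ i ∈ Finset.range k, a i + tail a k := by linarith
      _ = ∑' i, a i := by rw [← htz, hsplit]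

lemma achievement_subset_iter (hpos : ∀ n, 0 ≤ a n) (hsum : Summable a) (n : ℕ) :
    achievementSet a ⊆ iter a n := by
  classical
  rintro x ⟨I, hI0⟩
  have hI : HasSum (I.indicator a) x := by
    rwa [← hasSum_subtype_iff_indicator (f := a) (s := I)]
  set g : ℕ → ℝ := I.indicator a with hg
  have hgle : ∀ i, g i ≤ a i := fun i => Set.indicator_le_self' (fun j _ => hpos j) i
  have hgpos : ∀ i, 0 ≤ g i := fun i => Set.indicator_nonneg (fun j _ => hpos j) i
  have hgsum : Summable g := hI.summable
  have hx : x = ∑' i, g i := hI.tsum_eq.symm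
  have hsplit := Summable.sum_add_tsum_nat_add (f := g) n hgsum
  set f := ∑ i ∈ Finset.range n, g i with hf
  have hfF : f ∈ Fset a n := by
    refine ⟨(Finset.range n).filter (· ∈ I), Finset.filter_subset _ _, ?_⟩
    rw [hf, Finset.sum_filter]
    exact Finset.sum_congr rfl fun i _ => by
      by_cases h : i ∈ I <;> simp [hg, Set.indicator_apply, h]
  simp only [iter, Set.mem_iUnion]
  refine ⟨f, hfF, ?_, ?_⟩
  · rw [hx, ← hsplit]
    have : 0 ≤ ∑' i, g (i + n) := tsum_nonneg fun i => hgpos _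
    linarith
  · rw [hx, ← hsplit]
    have h1 : ∑' i, g (i + n) ≤ tail a n := by
      have hs2 : Summable (fun i => a (i + n)) := (summable_nat_add_iff n).2 hsum
      have hs1 : Summable (fun i => g (i + n)) := (summable_nat_add_iff n).2 hgsum
      have step : ∑' i, g (i + n) ≤ ∑' i, a (i + n) :=
        Summable.tsum_le_tsum (fun i => hgle (i + n)) hs1 hs2
      have heq : (∑' i, a (i + n)) = tail a n := tsum_congr fun i => congrArg a (by omega)
      linarith
    linarith

lemma iInter_iter_subset (hpos : ∀ n, 0 ≤ a n) (hsum : Summable a) :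
    (⋂ n, iter a n) ⊆ achievementSet a := by
  classical
  intro x hx
  -- choose witnesses
  have hchoice : ∀ n, ∃ J : Finset ℕ, J ⊆ Finset.range n ∧
      (∑ i ∈ J, a i) ≤ x ∧ x ≤ (∑ i ∈ J, a i) + tail a n := by
    intro n
    have := Set.mem_iInter.1 hx n
    simp only [iter, Set.mem_iUnion] at this
    obtain ⟨f, ⟨J, hJ, rfl⟩, h1, h2⟩ := this
    exact ⟨J, hJ, h1, h2⟩
  choose J hJsub hJ1 hJ2 using hchoice
  set u : ℕ → (ℕ → Bool) := fun n i => decide (i ∈ J n) with hu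
  obtain ⟨χ, -, hχ⟩ := (isCompact_univ (X := ℕ → Bool)).exists_mapClusterPt
    (u := u) (f := atTop) (le_principal_iff.2 univ_mem)
  set I : Set ℕ := {i | χ i = true} with hI
  -- frequently, u n agrees with χ on range m
  have hfreq : ∀ m : ℕ, ∃ n, m ≤ n ∧ ∀ i < m, (i ∈ J n ↔ i ∈ I) := by
    intro m
    have hV : (Set.pi (↑(Finset.range m) : Set ℕ) (fun i => {χ i})) ∈ nhds χ := by
      apply set_pi_mem_nhds (Finset.range m).finite_toSet
      intro i _
      simpa using (IsOpen.mem_nhds (isOpen_discrete {χ i}) rfl)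
    have := (mapClusterPt_iff_frequently.1 hχ) _ hV
    obtain ⟨n, hn, hmem⟩ := (this.and_eventually (eventually_ge_atTop m)).exists
    refine ⟨n, hmem, fun i hi => ?_⟩
    have := hn i (by simpa using hi)
    simp only [Set.mem_singleton_iff] at this
    constructor
    · intro h; simp only [hI, Set.mem_setOf_eq]; rw [← this, hu]; simpa using h
    · intro h
      have : u n i = true := by rw [this]; exact h
      simpa [hu] using this
  set g : ℕ → ℝ := I.indicator a with hg
  have hgle : ∀ i, g i ≤ a i := fun i => Set.indicator_le_self' (fun j _ => hpos j) i
  have hgpos : ∀ i, 0 ≤ g i := fun i => Set.indicator_nonneg (fun j _ => hpos j) i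
  have hgsum : Summable g := Summable.of_nonneg_of_le hgpos hgle hsum
  set S : ℕ → ℝ := fun m => ∑ i ∈ Finset.range m, g i with hS
  have key : ∀ m, 0 ≤ x - S m ∧ x - S m ≤ tail a m := by
    intro m
    obtain ⟨n, hmn, hagree⟩ := hfreq m
    have hSm : S m = ∑ i ∈ (J n) ∩ Finset.range m, a i := by
      rw [hS]
      rw [show (J n) ∩ Finset.range m = (Finset.range m).filter (· ∈ J n) from by
        ext i; simp [Finset.mem_filter, Finset.mem_inter, and_comm]]
      rw [Finset.sum_filter]
      refine Finset.sum_congr rfl fun i hi => ?_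
      simp only [Finset.mem_range] at hi
      by_cases h : i ∈ I
      · rw [if_pos ((hagree i hi).2 h)]
        simp [hg, Set.indicator_apply, h]
      · rw [if_neg (fun hc => h ((hagree i hi).1 hc))]
        simp [hg, Set.indicator_apply, h]
    have hsplitJ : ∑ i ∈ J n, a i = (∑ i ∈ (J n) ∩ Finset.range m, a i) +
        ∑ i ∈ (J n) \ Finset.range m, a i := by
      rw [← Finset.sum_inter_add_sum_sdiff]
    have hdiffsub : (J n) \ Finset.range m ⊆ Finset.Ico m n := by
      intro i hi
      simp only [Finset.mem_sdiff, Finset.mem_range, Finset.mem_Ico] at hi ⊢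
      have := hJsub n hi.1
      simp only [Finset.mem_range] at this
      exact ⟨by omega, by omega⟩
    have hIcoLe : ∑ i ∈ (J n) \ Finset.range m, a i ≤ ∑ i ∈ Finset.Ico m n, a i :=
      Finset.sum_le_sum_of_subset_of_nonneg hdiffsub (fun i _ _ => hpos i)
    have hIcoEq : ∑ i ∈ Finset.Ico m n, a i = tail a m - tail a n := by
      have h1 := tail_eq_sum_add hsum m (n - m)
      rw [show m + (n - m) = n from by omega] at h1
      have h2 : ∑ i ∈ Finset.range (n - m), a (m + i) = ∑ i ∈ Finset.Ico m n, a i := by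
        rw [Finset.sum_Ico_eq_sum_range]
      linarith
    have hdnn : 0 ≤ ∑ i ∈ (J n) \ Finset.range m, a i :=
      Finset.sum_nonneg fun i _ => hpos i
    have h1 := hJ1 n
    have h2 := hJ2 n
    have htn : 0 ≤ tail a n := tail_nonneg hpos n
    constructor
    · rw [hSm]; linarith
    · rw [hSm]; linarith
  have hStendsto : Tendsto S atTop (nhds x) := by
    have h0 : Tendsto (fun m => x - S m) atTop (nhds 0) := by
      apply squeeze_zero (fun m => (key m).1) (fun m => (key m).2)
      exact tail_tendsto hsum
    have := h0.const_sub x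
    simpa using this
  have hgx : HasSum g x := by
    have := hgsum.hasSum.tendsto_sum_nat
    have hx' : (∑' i, g i) = x := tendsto_nhds_unique this hStendsto
    exact hx' ▸ hgsum.hasSum
  exact ⟨I, (hasSum_subtype_iff_indicator (f := a) (s := I)).2 hgx⟩

def Dset (ε : ℝ) (F : Set ℝ) : Set ℝ :=
  {d | ∃ c ∈ F, ∃ b ∈ F, c ≤ b ∧ d = b - c ∧
    ∀ x ∈ F, c ≤ x → x < b → ∃ y ∈ F, x < y ∧ y ≤ x + ε}

lemma deltaEps_eq (ε : ℝ) (F : Set ℝ) : deltaEps ε F = sSup (Dset ε F) := rfl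

lemma zero_mem_Dset (ε : ℝ) (n : ℕ) : (0 : ℝ) ∈ Dset ε (Fset a n) :=
  ⟨0, zero_mem_Fset n, 0, zero_mem_Fset n, le_refl 0, by ring_nf,
    fun x _ h1 h2 => absurd (lt_of_le_of_lt h1 h2) (lt_irrefl 0)⟩

lemma Dset_nonempty (ε : ℝ) (n : ℕ) : (Dset ε (Fset a n)).Nonempty :=
  ⟨0, zero_mem_Dset ε n⟩

lemma Dset_bddAbove (hpos : ∀ n, 0 ≤ a n) (hsum : Summable a) (ε : ℝ) (n : ℕ) :
    BddAbove (Dset ε (Fset a n)) := by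
  refine ⟨∑' i, a i, fun d hd => ?_⟩
  obtain ⟨c, hc, b, hb, hcb, rfl, -⟩ := hd
  have := Fset_nonneg hpos hc
  have := Fset_le hpos hsum hb
  linarith

lemma deltaEps_nonneg (hpos : ∀ n, 0 ≤ a n) (hsum : Summable a) (ε : ℝ) (n : ℕ) :
    0 ≤ deltaEps ε (Fset a n) := by
  rw [deltaEps_eq]
  exact le_csSup (Dset_bddAbove hpos hsum ε n) (zero_mem_Dset ε n)

lemma deltaEps_le_tsum (hpos : ∀ n, 0 ≤ a n) (hsum : Summable a) (ε : ℝ) (n : ℕ) :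
    deltaEps ε (Fset a n) ≤ ∑' i, a i := by
  rw [deltaEps_eq]
  refine csSup_le (Dset_nonempty ε n) ?_
  intro d hd
  obtain ⟨c, hc, b, hb, hcb, rfl, -⟩ := hd
  have := Fset_nonneg hpos hc
  have := Fset_le hpos hsum hb
  linarith

lemma chain_subset_iter (hpos : ∀ n, 0 ≤ a n) (hsum : Summable a) {n : ℕ} {c b : ℝ}
    (hc : c ∈ Fset a n) (hb : b ∈ Fset a n) (hcb : c ≤ b)
    (hchain : ∀ x ∈ Fset a n, c ≤ x → x < b → ∃ y ∈ Fset a n, x < y ∧ y ≤ x + tail a n) :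
    Set.Icc c b ⊆ iter a n := by
  intro z hz
  set G := Fset a n ∩ Set.Icc c z with hG
  have hGfin : G.Finite := (Fset_finite n).subset (Set.inter_subset_left)
  have hGne : G.Nonempty := ⟨c, hc, le_refl c, hz.1⟩
  obtain ⟨f, hfG, hfmax⟩ := Set.Finite.exists_maximalFor id G hGfin hGne
  obtain ⟨hfF, hfc, hfz⟩ := hfG
  have htn : 0 ≤ tail a n := tail_nonneg hpos n
  by_cases hcase : z ≤ f + tail a n
  · simp only [iter, Set.mem_iUnion]
    exact ⟨f, hfF, hfz, hcase⟩
  push_neg at hcase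
  exfalso
  have hfb : f < b := by
    rcases lt_or_eq_of_le (le_trans hfz hz.2) with h | h
    · exact h
    · exact absurd (le_trans hz.2 (h ▸ le_refl f : b ≤ f)) (not_le.2 (by linarith))
  obtain ⟨y, hyF, hfy, hyle⟩ := hchain f hfF hfc hfb
  have hyG : y ∈ G := ⟨hyF, by linarith, by linarith⟩
  exact absurd (hfmax hyG (by simpa using le_of_lt hfy)) (by simpa using hfy)

lemma exists_max_of_finite {G : Set ℝ} (hfin : G.Finite) (hne : G.Nonempty) :
    ∃ m ∈ G, ∀ g ∈ G, g ≤ m := by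
  obtain ⟨m, hm, hmax⟩ := Set.Finite.exists_maximalFor id G hfin hne
  refine ⟨m, hm, fun g hg => ?_⟩
  by_contra h
  push_neg at h
  exact absurd (hmax hg (le_of_lt h)) (not_le.2 h)

lemma exists_min_of_finite {G : Set ℝ} (hfin : G.Finite) (hne : G.Nonempty) :
    ∃ m ∈ G, ∀ g ∈ G, m ≤ g := by
  obtain ⟨m, hm, hmin⟩ := Set.Finite.exists_minimalFor id G hfin hne
  refine ⟨m, hm, fun g hg => ?_⟩
  by_contra h
  push_neg at h
  exact absurd (hmin hg (le_of_lt h)) (not_le.2 h)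

lemma forward_bound (hpos : ∀ n, 0 ≤ a n) (hsum : Summable a) {u v : ℝ} (huv : u < v)
    (hsub : Set.Icc u v ⊆ achievementSet a) {n : ℕ} :
    (v - u) - tail a n ≤ deltaEps (tail a n) (Fset a n) := by
  have hmemiter : ∀ z ∈ Set.Icc u v, ∃ f ∈ Fset a n, f ≤ z ∧ z ≤ f + tail a n := by
    intro z hz
    have := achievement_subset_iter hpos hsum n (hsub hz)
    simp only [iter, Set.mem_iUnion] at this
    obtain ⟨f, hf, h1, h2⟩ := this
    exact ⟨f, hf, h1, h2⟩
  have htn : 0 ≤ tail a n := tail_nonneg hpos n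
  obtain ⟨f0, hf0F, hf0le, -⟩ := hmemiter u ⟨le_refl u, le_of_lt huv⟩
  obtain ⟨c, ⟨hcF, hcu⟩, hcmax⟩ := exists_max_of_finite
    ((Fset_finite n).subset (Set.inter_subset_left (t := Set.Iic u))) ⟨f0, hf0F, hf0le⟩
  obtain ⟨f1, hf1F, hf1le, hf1ge⟩ := hmemiter v ⟨le_of_lt huv, le_refl v⟩
  obtain ⟨b, ⟨hbF, hbv⟩, hbmax⟩ := exists_max_of_finite
    ((Fset_finite n).subset (Set.inter_subset_left (t := Set.Iic v))) ⟨f1, hf1F, hf1le⟩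
  have hbge : v - tail a n ≤ b := le_trans (by linarith) (hbmax f1 ⟨hf1F, hf1le⟩)
  have hcb : c ≤ b := hbmax c ⟨hcF, le_trans hcu (le_of_lt huv)⟩
  have hchain : ∀ x ∈ Fset a n, c ≤ x → x < b → ∃ y ∈ Fset a n, x < y ∧ y ≤ x + tail a n := by
    intro x hxF hcx hxb
    obtain ⟨y, ⟨hyF, hxy⟩, hymin⟩ := exists_min_of_finite
      ((Fset_finite n).subset (Set.inter_subset_left (t := Set.Ioi x))) ⟨b, hbF, hxb⟩
    have hyb : y ≤ b := hymin b ⟨hbF, hxb⟩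
    have hyu : u < y := by
      by_contra h
      push_neg at h
      exact absurd (le_trans (hcmax y ⟨hyF, h⟩) hcx) (not_le.2 hxy)
    refine ⟨y, hyF, hxy, ?_⟩
    by_contra h
    push_neg at h
    set L := max (x + tail a n) u with hL
    have hLy : L < y := max_lt h hyu
    set p := (L + y) / 2 with hp
    have hpL : L < p := by rw [hp]; linarith
    have hpy : p < y := by rw [hp]; linarith
    have hpu : u ≤ p := le_trans (le_max_right _ _) (le_of_lt hpL)
    have hpv : p ≤ v := le_trans (le_of_lt hpy) (le_trans hyb hbv)
    obtain ⟨f, hfF, hfp, hpf⟩ := hmemiter p ⟨hpu, hpv⟩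
    have hfx : f ≤ x := by
      by_contra hc
      push_neg at hc
      exact absurd (le_trans (hymin f ⟨hfF, hc⟩) hfp) (not_le.2 hpy)
    have hxL : x + tail a n ≤ L := le_max_left _ _
    linarith
  have hmem : b - c ∈ Dset (tail a n) (Fset a n) := ⟨c, hcF, b, hbF, hcb, rfl, hchain⟩
  have := le_csSup (Dset_bddAbove hpos hsum (tail a n) n) hmem
  rw [deltaEps_eq]
  have hcu' : c ≤ u := hcu
  linarith

lemma backward (hpos : ∀ n, 0 ≤ a n) (hsum : Summable a)
    (h : 0 < Filter.atTop.liminf (fun n => deltaEps (tail a n) (Fset a n))) :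
    ∃ u v : ℝ, u < v ∧ Set.Icc u v ⊆ achievementSet a := by
  set L := Filter.atTop.liminf (fun n => deltaEps (tail a n) (Fset a n)) with hL
  set δ := L / 2 with hδ
  have hδpos : 0 < δ := by positivity
  have hbdd : Filter.atTop.IsBoundedUnder (· ≥ ·)
      (fun n => deltaEps (tail a n) (Fset a n)) :=
    Filter.isBoundedUnder_of ⟨0, fun n => deltaEps_nonneg hpos hsum (tail a n) n⟩
  have hev : ∀ᶠ n in Filter.atTop, δ < deltaEps (tail a n) (Fset a n) :=
    Filter.eventually_lt_of_lt_liminf (by rw [← hL]; linarith) hbdd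
  obtain ⟨N, hN⟩ := Filter.eventually_atTop.1 hev
  -- for each n ≥ N, an interval of length δ inside iter a n
  have hblock : ∀ n, N ≤ n → ∃ c, Set.Icc c (c + δ) ⊆ iter a n := by
    intro n hn
    have h1 : δ < sSup (Dset (tail a n) (Fset a n)) := by
      rw [← deltaEps_eq]; exact hN n hn
    obtain ⟨d, hd, hδd⟩ := exists_lt_of_lt_csSup (Dset_nonempty _ n) h1
    obtain ⟨c, hcF, b, hbF, hcb, rfl, hchain⟩ := hd
    refine ⟨c, fun z hz => chain_subset_iter hpos hsum hcF hbF hcb hchain ⟨hz.1, ?_⟩⟩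
    have := hz.2
    linarith
  set K : ℕ → Set ℝ := fun m => {x | Set.Icc x (x + δ) ⊆ iter a (N + m)} with hK
  have hKclosed : ∀ m, IsClosed (K m) := by
    intro m
    have : K m = ⋂ t ∈ Set.Icc (0:ℝ) δ, (fun x => x + t) ⁻¹' (iter a (N + m)) := by
      ext x
      simp only [hK, Set.mem_setOf_eq, Set.mem_iInter, Set.mem_preimage]
      constructor
      · intro hx t ht
        exact hx ⟨by linarith [ht.1], by linarith [ht.2]⟩
      · intro hx z hz
        have := hx (z - x) ⟨by linarith [hz.1], by linarith [hz.2]⟩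
        simpa using this
    rw [this]
    exact isClosed_biInter fun t _ =>
      (isClosed_iter (N + m)).preimage (continuous_add_right t)
  have hKsub : ∀ m, K m ⊆ iter a (N + m) := by
    intro m x hx
    exact hx ⟨le_refl x, by linarith⟩
  have hKne : ∀ m, (K m).Nonempty := by
    intro m
    obtain ⟨c, hc⟩ := hblock (N + m) (Nat.le_add_right N m)
    exact ⟨c, hc⟩
  have hKmono : ∀ m, K (m + 1) ⊆ K m := by
    intro m x hx
    intro z hz
    have h1 : iter a (N + (m + 1)) ⊆ iter a (N + m) := by
      rw [show N + (m + 1) = (N + m) + 1 from by omega]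
      exact iter_succ_subset hpos hsum (N + m)
    exact h1 (hx hz)
  have hK0compact : IsCompact (K 0) := by
    apply IsCompact.of_isClosed_subset (isCompact_Icc (a := (0:ℝ)) (b := ∑' i, a i))
      (hKclosed 0)
    exact fun x hx => iter_subset_Icc hpos hsum (N + 0) (hKsub 0 hx)
  obtain ⟨x, hx⟩ := IsCompact.nonempty_iInter_of_sequence_nonempty_isCompact_isClosed
    K hKmono hKne hK0compact hKclosed
  refine ⟨x, x + δ, by linarith, ?_⟩
  have hsub : Set.Icc x (x + δ) ⊆ ⋂ n, iter a n := by
    intro z hz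
    rw [Set.mem_iInter]
    intro n
    rcases le_or_gt N n with hn | hn
    · have h2 : Set.Icc x (x + δ) ⊆ iter a (N + (n - N)) := Set.mem_iInter.1 hx (n - N)
      rw [show N + (n - N) = n from by omega] at h2
      exact h2 hz
    · have h2 : Set.Icc x (x + δ) ⊆ iter a (N + 0) := Set.mem_iInter.1 hx 0
      rw [show N + 0 = N from by omega] at h2
      exact iter_anti hpos hsum (le_of_lt hn) (h2 hz)
  exact fun z hz => iInter_iter_subset hpos hsum (hsub hz)

end Aux

/-- The achievement set contains a nondegenerate interval iff
lim Δ_{r_n} F_n > 0 (the limit exists since Δ_{r_n}F_n + r_n is nonincreasing). -/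
theorem stmt_4 (a : ℕ → ℝ) (hpos : ∀ n, 0 ≤ a n) (hmono : Antitone a)
    (hsum : Summable a) :
    (∃ u v : ℝ, u < v ∧ Set.Icc u v ⊆ achievementSet a) ↔
      0 < Filter.atTop.liminf (fun n => deltaEps (tail a n) (Fset a n)) := by
  constructor
  · rintro ⟨u, v, huv, hsub⟩
    have hcob : Filter.atTop.IsCoboundedUnder (· ≥ ·)
        (fun n => deltaEps (tail a n) (Fset a n)) :=
      Filter.isCoboundedUnder_ge_of_le _ (fun n => deltaEps_le_tsum hpos hsum (tail a n) n)
    have hevtail : ∀ᶠ n in Filter.atTop, tail a n < (v - u) / 2 :=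
      (tail_tendsto hsum).eventually_lt_const (by linarith)
    have hev : ∀ᶠ n in Filter.atTop,
        (v - u) / 2 ≤ deltaEps (tail a n) (Fset a n) := by
      filter_upwards [hevtail] with n hn
      have := forward_bound hpos hsum huv hsub (n := n)
      linarith
    have := Filter.le_liminf_of_le hcob hev
    linarith
  · exact backward hpos hsum
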